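/- arXiv:1612.07041 — 2 statements merged into one kernel-verified Lean document; each statement's English description precedes it below -/
import Mathlib

section
/- Fix integers p ≥ 1 and k ≥ 1, a set L, and a labeling u : {1,…,p} → L. Let NC(W^k) be the set of noncrossing partitions π of {1,…,2pk} such that (i) for every s ∈ {1,…,2pk}, either σ_π(s) ≡ s+1 (mod 2p) or σ_π(s) ≡ 1−s (mod 2p), and (ii) every block of π is constant for the label map λ, where λ(s) = u(ι(s)), ι(s) = ρ(s) if ρ(s) ≤ p and ι(s) = 2p+1−ρ(s) otherwise, and ρ(s) ∈ {1,…,2p} is the residue of s modulo 2p. Let NC²(W̃^k) be the set of noncrossing perfect matchings σ of {1,…,4pk} such that every pair {a,b} ∈ σ satisfies λ̃(a) = λ̃(b) and at least one of: (1) a+b ≡ 1 (mod 4p); (2) {ρ̃(a), ρ̃(b)} = {2i, 2i+1} for some 1 ≤ i ≤ p−1; (3) {ρ̃(a), ρ̃(b)} = {4p−2i, 4p+1−2i} for some 1 ≤ i ≤ p−1; here ρ̃(t) ∈ {1,…,4p} is the residue of t modulo 4p, ι̃(t) = ρ̃(t) if ρ̃(t) ≤ 2p and ι̃(t) = 4p+1−ρ̃(t)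 otherwise, and λ̃(t) = u(⌈ι̃(t)/2⌉). Then the map π ↦ α(π) = { {2s, 2σ_π(s) − 1} : s ∈ {1,…,2pk} } is a bijection from NC(W^k) onto NC²(W̃^k). -/
open Finset
open scoped Classical

/-- `P` is a set partition of `{1,…,n}` (modelled on `Fin n`): a collection of nonempty
blocks such that every element belongs to exactly one block. -/
def IsPartitionOf (n : ℕ) (P : Finset (Finset (Fin n))) : Prop :=
  (∀ B ∈ P, B.Nonempty) ∧ ∀ s : Fin n, ∃! B, B ∈ P ∧ s ∈ B

/-- `a` and `b` lie in a common block of `P`. -/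
def SameBlock {n : ℕ} (P : Finset (Finset (Fin n))) (a b : Fin n) : Prop :=
  ∃ B ∈ P, a ∈ B ∧ b ∈ B

/-- A partition is noncrossing if there are no `a < b < c < d` with `a, c` in one block
and `b, d` in another, distinct block. -/
def IsNoncrossing {n : ℕ} (P : Finset (Finset (Fin n))) : Prop :=
  ∀ a b c d : Fin n, a < b → b < c → c < d →
    SameBlock P a c → SameBlock P b d → SameBlock P a b

/-- A perfect matching (pair partition): a partition all of whose blocks have two elements. -/
def IsPairPartition (n : ℕ) (P : Finset (Finset (Fin n))) : Prop :=
  IsPartitionOf n P ∧ ∀ B ∈ P, B.card = 2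

/-- The block of `P` containing `s`. -/
noncomputable def theBlock {n : ℕ} (P : Finset (Finset (Fin n))) (s : Fin n) :
    Finset (Fin n) :=
  univ.filter (fun t => SameBlock P s t)

/-- The cycle permutation `σ_π` of a partition: on a block `{s₁ < s₂ < … < s_m}` it sends
`s_i` to `s_{i+1}` for `i < m` and sends `s_m` back to `s₁`. -/
noncomputable def cyclePerm {n : ℕ} (P : Finset (Finset (Fin n))) (s : Fin n) : Fin n :=
  if h : ((theBlock P s).filter (fun t => s < t)).Nonempty then
    ((theBlock P s).filter (fun t => s < t)).min' h
  else if h' : (theBlock P s).Nonempty then (theBlock P s).min' h' else s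

/-- The 1-based value of `s : Fin n`, i.e. the corresponding element of `{1,…,n}`. -/
def val1 {n : ℕ} (s : Fin n) : ℕ := s.val + 1

/-- The residue in `{1,…,m}` of the (1-based) element corresponding to `s : Fin n`. -/
def res {n : ℕ} (s : Fin n) (m : ℕ) : ℕ := s.val % m + 1

/-- The map `α`, sending a partition `π` of `{1,…,n}` to the collection of pairs
`{2s, 2σ_π(s) − 1}`, `s ∈ {1,…,n}` (in 0-based indexing, `2s ↦ 2s+1` and
`2σ_π(s)−1 ↦ 2⬝(σ_π(s))`). -/
noncomputable def alphaMap {n : ℕ} (P : Finset (Finset (Fin n))) :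
    Finset (Finset (Fin (2*n))) :=
  (univ : Finset (Fin n)).image fun s =>
    ({⟨2 * s.val + 1, by have := s.isLt; omega⟩,
      ⟨2 * (cyclePerm P s).val, by have := (cyclePerm P s).isLt; omega⟩} :
      Finset (Fin (2*n)))

/-- Substitution `Σ_{i≥0} t_i g^i` of a power series with zero constant term into the
series with coefficient sequence `t`; the `m`-th coefficient only involves `i ≤ m`. -/
noncomputable def substSeries (t : ℕ → ℝ) (g : PowerSeries ℝ) : PowerSeries ℝ :=
  PowerSeries.mk fun m =>
    ∑ i ∈ Finset.range (m+1), t i * (PowerSeries.coeff (R := ℝ) m) (g ^ i)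

/-- The even part `Σ a_{2n} z^{2n}` of a formal power series `Σ a_n z^n`. -/
noncomputable def evenPart (f : PowerSeries ℝ) : PowerSeries ℝ :=
  PowerSeries.mk fun n => if Even n then PowerSeries.coeff (R := ℝ) n f else 0

/-- The label of a position of `{1,…,2pk}`: the residue `ρ(s) ∈ {1,…,2p}` is turned into
the letter index `ι(s) = ρ(s)` if `ρ(s) ≤ p` and `ι(s) = 2p+1−ρ(s)` otherwise, and the
label is `u(ι(s))`. -/
def lab {L : Type*} (p : ℕ) (u : ℕ → L) {n : ℕ} (s : Fin n) : L :=
  u (if res s (2*p) ≤ p then res s (2*p) else 2*p + 1 - res s (2*p))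

/-- The label of a position of `{1,…,4pk}`: the residue `ρ̃(t) ∈ {1,…,4p}` gives
`ι̃(t) = ρ̃(t)` if `ρ̃(t) ≤ 2p`, `ι̃(t) = 4p+1−ρ̃(t)` otherwise, and the label is
`u(⌈ι̃(t)/2⌉)`. -/
def labTilde {L : Type*} (p : ℕ) (u : ℕ → L) {n : ℕ} (t : Fin n) : L :=
  u (((if res t (4*p) ≤ 2*p then res t (4*p) else 4*p + 1 - res t (4*p)) + 1) / 2)

/-!
The map `α` factors as `π ↦ σ_π ↦ {{2s, 2σ(s)−1}}`. A partition is the cycle decomposition of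
its `σ_π`, and for a noncrossing `π` the permutation `σ_π` is nested: it maps `(s, σ s)` into
itself when `s < σ s`, and `[σ s, s)` into `(σ s, s]` otherwise. Conversely the cycles of a
nested permutation form a noncrossing partition. A permutation `σ` is nested exactly when the
pairing `{{2s, 2σ(s)−1}}` is noncrossing, and every noncrossing pairing in which each pair joins
an even and an odd point is of this form. So `α` is a bijection from noncrossing partitions onto
such pairings, and it remains to match the adaptedness conditions pair by pair: the residues of
`2s` and `2σ(s)−1` mod `4p` are determined by those of `s` and `σ(s)` mod `2p`, condition (1) is
the reflection `σ(s) ≡ 1−s`, conditions (2) and (3) are the shifts `σ(s) ≡ s+1` that are not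
also reflections, and `λ̃(2s) = λ(s)`, `λ̃(2t−1) = λ(t)`.
-/

open Equiv

namespace IsPartitionOf

variable {n : ℕ} {P : Finset (Finset (Fin n))}

lemma eq_of_mem (hP : IsPartitionOf n P) {B B' : Finset (Fin n)} {a : Fin n}
    (hB : B ∈ P) (hB' : B' ∈ P) (ha : a ∈ B) (ha' : a ∈ B') : B = B' :=
  (hP.2 a).unique ⟨hB, ha⟩ ⟨hB', ha'⟩

lemma theBlock_eq (hP : IsPartitionOf n P) {B : Finset (Fin n)} {a : Fin n}
    (hB : B ∈ P) (ha : a ∈ B) : theBlock P a = B := by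
  ext t
  simp only [theBlock, mem_filter, mem_univ, true_and]
  exact ⟨fun ⟨C, hC, haC, htC⟩ => hP.eq_of_mem hC hB haC ha ▸ htC, fun ht => ⟨B, hB, ha, ht⟩⟩

lemma theBlock_mem (hP : IsPartitionOf n P) (s : Fin n) : theBlock P s ∈ P := by
  obtain ⟨B, ⟨hB, hs⟩, -⟩ := hP.2 s
  rwa [hP.theBlock_eq hB hs]

lemma mem_theBlock_self (hP : IsPartitionOf n P) (s : Fin n) : s ∈ theBlock P s := by
  obtain ⟨B, ⟨hB, hs⟩, -⟩ := hP.2 s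
  rwa [hP.theBlock_eq hB hs]

lemma sameBlock_iff (hP : IsPartitionOf n P) {s t : Fin n} :
    SameBlock P s t ↔ theBlock P s = theBlock P t := by
  refine ⟨fun ⟨B, hB, hs, ht⟩ => by rw [hP.theBlock_eq hB hs, hP.theBlock_eq hB ht],
    fun h => ⟨theBlock P s, hP.theBlock_mem s, hP.mem_theBlock_self s, ?_⟩⟩
  rw [h]
  exact hP.mem_theBlock_self t

lemma mem_theBlock_iff (hP : IsPartitionOf n P) {s t : Fin n} :
    t ∈ theBlock P s ↔ theBlock P s = theBlock P t := by
  rw [← hP.sameBlock_iff]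
  simp [theBlock]

lemma eq_image_theBlock (hP : IsPartitionOf n P) : P = univ.image (theBlock P) := by
  ext B
  simp only [mem_image, mem_univ, true_and]
  refine ⟨fun hB => ?_, fun ⟨s, hs⟩ => hs ▸ hP.theBlock_mem s⟩
  obtain ⟨s, hs⟩ := hP.1 B hB
  exact ⟨s, hP.theBlock_eq hB hs⟩

lemma eq_of_sameBlock_iff {P' : Finset (Finset (Fin n))} (hP : IsPartitionOf n P)
    (hP' : IsPartitionOf n P') (h : ∀ s t, SameBlock P s t ↔ SameBlock P' s t) : P = P' := by
  rw [hP.eq_image_theBlock, hP'.eq_image_theBlock]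
  congr 1
  funext s
  ext t
  simp only [theBlock, mem_filter, mem_univ, true_and, h]

end IsPartitionOf

section CyclePerm

variable {n : ℕ} {P : Finset (Finset (Fin n))}

lemma cyclePerm_of_exists_gt {s : Fin n} (h : ∃ t ∈ theBlock P s, s < t) :
    s < cyclePerm P s ∧ ∀ w ∈ theBlock P s, s < w → cyclePerm P s ≤ w := by
  obtain ⟨t, ht, hst⟩ := h
  have hne : ((theBlock P s).filter (s < ·)).Nonempty := ⟨t, mem_filter.mpr ⟨ht, hst⟩⟩
  rw [cyclePerm, dif_pos hne]
  exact ⟨(mem_filter.mp (min'_mem _ hne)).2,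
    fun w hw hsw => min'_le _ _ (mem_filter.mpr ⟨hw, hsw⟩)⟩

lemma cyclePerm_of_forall_le (hP : IsPartitionOf n P) {s : Fin n}
    (h : ∀ w ∈ theBlock P s, w ≤ s) : ∀ w ∈ theBlock P s, cyclePerm P s ≤ w := by
  have hempty : ¬((theBlock P s).filter (s < ·)).Nonempty := fun ⟨t, ht⟩ =>
    (mem_filter.mp ht).2.not_ge (h t (mem_filter.mp ht).1)
  rw [cyclePerm, dif_neg hempty, dif_pos ⟨s, hP.mem_theBlock_self s⟩]
  exact fun w hw => min'_le _ _ hw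

lemma cyclePerm_mem (hP : IsPartitionOf n P) (s : Fin n) : cyclePerm P s ∈ theBlock P s := by
  unfold cyclePerm
  split_ifs with h h'
  · exact (mem_filter.mp (min'_mem _ h)).1
  · exact min'_mem _ h'
  · exact hP.mem_theBlock_self s

lemma theBlock_cyclePerm (hP : IsPartitionOf n P) (s : Fin n) :
    theBlock P (cyclePerm P s) = theBlock P s :=
  ((hP.mem_theBlock_iff).mp (cyclePerm_mem hP s)).symm

lemma cyclePerm_injective (hP : IsPartitionOf n P) : Function.Injective (cyclePerm P) := by
  intro a b hab
  by_contra hne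
  wlog hlt : a < b generalizing a b
  · exact this hab.symm (Ne.symm hne) (lt_of_le_of_ne (not_lt.mp hlt) (Ne.symm hne))
  have hBab : theBlock P a = theBlock P b := by
    rw [← theBlock_cyclePerm hP a, hab, theBlock_cyclePerm hP b]
  have hb : b ∈ theBlock P a := hBab ▸ hP.mem_theBlock_self b
  obtain ⟨ha_lt, ha_le⟩ := cyclePerm_of_exists_gt ⟨b, hb, hlt⟩
  by_cases hup : ∃ w ∈ theBlock P b, b < w
  · -- `σ a ≤ b < σ b`
    exact (ha_le b hb hlt).not_gt (hab ▸ (cyclePerm_of_exists_gt hup).1)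
  · -- `σ b` is the least element of the block, so `σ b ≤ a < σ a`
    push Not at hup
    exact (cyclePerm_of_forall_le hP hup a (hBab ▸ hP.mem_theBlock_self a)).not_gt (hab ▸ ha_lt)

noncomputable def cycleEquiv (hP : IsPartitionOf n P) : Perm (Fin n) :=
  Equiv.ofBijective _ (cyclePerm_injective hP).bijective_of_finite

end CyclePerm

lemma Equiv.Perm.SameCycle.mem_of_mapsTo {α : Type*} [Finite α] {τ : Perm α} {S : Set α}
    (hS : Set.MapsTo τ S S) {x y : α} (h : τ.SameCycle x y) (hx : x ∈ S) : y ∈ S := by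
  obtain ⟨i, rfl⟩ := h.exists_nat_pow_eq
  rw [Perm.coe_pow]
  exact hS.iterate i hx

section Orbits

variable {n : ℕ}

noncomputable def orbitPartition (τ : Perm (Fin n)) : Finset (Finset (Fin n)) :=
  univ.image fun s => univ.filter (τ.SameCycle s)

lemma sameBlock_orbitPartition {τ : Perm (Fin n)} {s t : Fin n} :
    SameBlock (orbitPartition τ) s t ↔ τ.SameCycle s t := by
  simp only [SameBlock, orbitPartition, mem_image, mem_univ, true_and, exists_exists_eq_and,
    mem_filter]
  exact ⟨fun ⟨w, hs, ht⟩ => hs.symm.trans ht, fun h => ⟨s, .refl τ s, h⟩⟩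

lemma isPartitionOf_orbitPartition (τ : Perm (Fin n)) : IsPartitionOf n (orbitPartition τ) := by
  refine ⟨?_, fun s => ⟨univ.filter (τ.SameCycle s), ?_, ?_⟩⟩
  · simp only [orbitPartition, mem_image, mem_univ, true_and, forall_exists_index,
      forall_apply_eq_imp_iff]
    exact fun s => ⟨s, mem_filter.mpr ⟨mem_univ _, .refl τ s⟩⟩
  · exact ⟨mem_image_of_mem _ (mem_univ s), mem_filter.mpr ⟨mem_univ _, .refl τ s⟩⟩
  · rintro B ⟨hB, hsB⟩
    obtain ⟨w, -, rfl⟩ := mem_image.mp hB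
    ext t
    have hws : τ.SameCycle w s := (mem_filter.mp hsB).2
    simp only [mem_filter, mem_univ, true_and]
    exact ⟨fun h => hws.symm.trans h, fun h => hws.trans h⟩

lemma mem_theBlock_orbitPartition {τ : Perm (Fin n)} {s t : Fin n} :
    t ∈ theBlock (orbitPartition τ) s ↔ τ.SameCycle s t := by
  simp [theBlock, sameBlock_orbitPartition]

variable {P : Finset (Finset (Fin n))}

lemma IsPartitionOf.sameBlock_iff_sameCycle (hP : IsPartitionOf n P) {s t : Fin n} :
    SameBlock P s t ↔ (cycleEquiv hP).SameCycle s t := by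
  have hS : Set.MapsTo (cycleEquiv hP) (theBlock P s) (theBlock P s) := fun w hw => by
    rw [Finset.mem_coe, hP.mem_theBlock_iff] at hw ⊢
    rw [hw]
    exact (theBlock_cyclePerm hP w).symm
  refine ⟨fun h => ?_, fun h => ⟨_, hP.theBlock_mem s, hP.mem_theBlock_self s,
    h.mem_of_mapsTo hS (hP.mem_theBlock_self s)⟩⟩
  rw [hP.sameBlock_iff] at h
  -- every element of the block is reached from its least element `m`
  set m := (theBlock P s).min' ⟨s, hP.mem_theBlock_self s⟩
  suffices hm : ∀ t ∈ theBlock P s, (cycleEquiv hP).SameCycle m t from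
    (hm s (hP.mem_theBlock_self s)).symm.trans (hm t (h ▸ hP.mem_theBlock_self t))
  intro t ht
  induction t using WellFoundedLT.induction with
  | ind t ih =>
  rcases (min'_le _ t ht).eq_or_lt with hmt | hmt
  · exact hmt ▸ .refl _ _
  · -- the predecessor `t'` of `t` in the block is mapped to `t`
    have hne : ((theBlock P s).filter (· < t)).Nonempty := ⟨m, mem_filter.mpr ⟨min'_mem _ _, hmt⟩⟩
    set t' := ((theBlock P s).filter (· < t)).max' hne
    obtain ⟨ht', ht't⟩ := mem_filter.mp (max'_mem _ hne)
    have hBt' : theBlock P t' = theBlock P s := (hP.mem_theBlock_iff.mp ht').symm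
    obtain ⟨hlt, hle⟩ := cyclePerm_of_exists_gt (s := t') ⟨t, hBt' ▸ ht, ht't⟩
    have hσmem : cyclePerm P t' ∈ theBlock P s := hBt' ▸ cyclePerm_mem hP t'
    have hσt' : cyclePerm P t' = t :=
      (hle t (hBt' ▸ ht) ht't).antisymm (not_lt.mp fun hσt =>
        hlt.not_ge (le_max' _ _ (mem_filter.mpr ⟨hσmem, hσt⟩)))
    have := Perm.sameCycle_apply_right.mpr (ih t' ht't ht')
    rwa [cycleEquiv, ofBijective_apply, hσt'] at this

lemma IsPartitionOf.eq_orbitPartition (hP : IsPartitionOf n P) :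
    P = orbitPartition (cycleEquiv hP) :=
  hP.eq_of_sameBlock_iff (isPartitionOf_orbitPartition _) fun _ _ => by
    rw [hP.sameBlock_iff_sameCycle, sameBlock_orbitPartition]

lemma IsPartitionOf.forall_mem_block_iff {α : Type*} (hP : IsPartitionOf n P) (f : Fin n → α) :
    (∀ B ∈ P, ∀ a ∈ B, ∀ b ∈ B, f a = f b) ↔ ∀ s, f s = f (cyclePerm P s) := by
  refine ⟨fun h s => h _ (hP.theBlock_mem s) _ (hP.mem_theBlock_self s) _ (cyclePerm_mem hP s),
    fun h B hB a ha b hb => ?_⟩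
  have hS : Set.MapsTo (cycleEquiv hP) {w | f w = f a} {w | f w = f a} := fun w hw =>
    (h w).symm.trans hw
  exact ((hP.sameBlock_iff_sameCycle.mp ⟨B, hB, ha, hb⟩).mem_of_mapsTo hS rfl).symm

lemma injOn_cyclePerm : Set.InjOn (cyclePerm (n := n)) {P | IsPartitionOf n P} := by
  intro P (hP : IsPartitionOf n P) P' (hP' : IsPartitionOf n P') h
  rw [hP.eq_orbitPartition, hP'.eq_orbitPartition]
  congr 1
  exact Equiv.ext fun s => congrFun h s

end Orbits

section Nested

variable {n : ℕ}

/-- The interval condition that characterises the cycle permutations of noncrossing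
partitions. -/
def IsNested (σ : Fin n → Fin n) : Prop :=
  (∀ ⦃s u⦄, s < σ s → u ∈ Set.Ioo s (σ s) → σ u ∈ Set.Ioo s (σ s)) ∧
  (∀ ⦃s u⦄, σ s ≤ s → u ∈ Set.Ico (σ s) s → σ u ∈ Set.Ioc (σ s) s)

lemma IsNested.mapsTo_Ioo {σ : Fin n → Fin n} (h : IsNested σ) {s : Fin n} (hs : s < σ s) :
    Set.MapsTo σ (Set.Ioo s (σ s)) (Set.Ioo s (σ s)) :=
  fun _ hu => h.1 hs hu

lemma IsNested.mapsTo_Icc {σ : Fin n → Fin n} (h : IsNested σ) {s : Fin n} (hs : σ s ≤ s) :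
    Set.MapsTo σ (Set.Icc (σ s) s) (Set.Icc (σ s) s) := by
  intro u ⟨hsu, hus⟩
  rcases hus.eq_or_lt with rfl | hus
  · exact ⟨le_rfl, hs⟩
  · exact Set.Ioc_subset_Icc_self (h.2 hs ⟨hsu, hus⟩)

variable {P : Finset (Finset (Fin n))}

lemma IsNoncrossing.theBlock_eq (hnc : IsNoncrossing P) (hP : IsPartitionOf n P)
    {a b c d : Fin n} (hab : a < b) (hbc : b < c) (hcd : c < d)
    (hac : theBlock P a = theBlock P c) (hbd : theBlock P b = theBlock P d) :
    theBlock P a = theBlock P b := by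
  rw [← hP.sameBlock_iff] at hac hbd ⊢
  exact hnc a b c d hab hbc hcd hac hbd

lemma IsNoncrossing.isNested_cyclePerm (hnc : IsNoncrossing P) (hP : IsPartitionOf n P) :
    IsNested (cyclePerm P) := by
  -- if `σ u` left the interval, the arc `{u, σ u}` would cross the arc `{s, σ s}`
  set σ := cyclePerm P
  have hσ : ∀ w, theBlock P (σ w) = theBlock P w := theBlock_cyclePerm hP
  constructor
  · intro s u hs ⟨hsu, huσ⟩
    obtain ⟨-, hmin⟩ := cyclePerm_of_exists_gt ⟨σ s, cyclePerm_mem hP s, hs⟩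
    have hu : theBlock P s ≠ theBlock P u := fun h =>
      (hmin u (hP.mem_theBlock_iff.mpr h) hsu).not_gt huσ
    refine ⟨lt_of_not_ge fun h => ?_, lt_of_not_ge fun h => ?_⟩
    · rcases h.lt_or_eq with h | h
      · exact hu ((hnc.theBlock_eq hP h hsu huσ (hσ u) (hσ s).symm).symm.trans (hσ u))
      · exact hu (h ▸ hσ u)
    · rcases h.lt_or_eq with h | h
      · exact hu (hnc.theBlock_eq hP hsu huσ h (hσ s).symm (hσ u).symm)
      · exact hu ((hσ s).symm.trans (h ▸ hσ u))
  · intro s u hs ⟨hσu, hus⟩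
    have hle : ∀ w ∈ theBlock P s, w ≤ s := fun w hw => not_lt.mp fun hsw =>
      hs.not_gt (cyclePerm_of_exists_gt ⟨w, hw, hsw⟩).1
    by_cases hu : theBlock P s = theBlock P u
    · -- `σ u` is the next element of the block after `u`, and `s` is such an element
      have hsu : s ∈ theBlock P u := hu ▸ hP.mem_theBlock_self s
      obtain ⟨hlt, hmin⟩ := cyclePerm_of_exists_gt ⟨s, hsu, hus⟩
      exact ⟨hσu.trans_lt hlt, hmin s hsu hus⟩
    have hσu' : σ s < u := hσu.lt_of_ne fun h => hu (h ▸ (hσ s).symm)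
    refine ⟨lt_of_not_ge fun h => ?_, le_of_not_gt fun h => ?_⟩
    · rcases h.lt_or_eq with h | h
      · exact hu ((hσ s).symm.trans
          ((hnc.theBlock_eq hP h hσu' hus (hσ u) (hσ s)).symm.trans (hσ u)))
      · exact hu ((hσ s).symm.trans (h ▸ hσ u))
    · exact hu ((hσ s).symm.trans (hnc.theBlock_eq hP hσu' hus h (hσ s) (hσ u).symm))

lemma IsNested.cyclePerm_orbitPartition {τ : Perm (Fin n)} (h : IsNested τ) :
    cyclePerm (orbitPartition τ) = τ := by
  funext s
  have hτs : τ s ∈ theBlock (orbitPartition τ) s :=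
    mem_theBlock_orbitPartition.mpr (Perm.sameCycle_apply_right.mpr (.refl τ s))
  rcases lt_or_ge s (τ s) with hs | hs
  · obtain ⟨hlt, hmin⟩ := cyclePerm_of_exists_gt ⟨τ s, hτs, hs⟩
    refine (hmin _ hτs hs).antisymm (not_lt.mp fun hσ => ?_)
    -- an element of the cycle of `s` inside `(s, τ s)` would bring `s` into that interval
    have hcyc := mem_theBlock_orbitPartition.mp (cyclePerm_mem (isPartitionOf_orbitPartition τ) s)
    exact (hcyc.symm.mem_of_mapsTo (h.mapsTo_Ioo hs) ⟨hlt, hσ⟩).1.false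
  · have hIcc : ∀ w ∈ theBlock (orbitPartition τ) s, w ∈ Set.Icc (τ s) s := fun w hw =>
      (mem_theBlock_orbitPartition.mp hw).mem_of_mapsTo (h.mapsTo_Icc hs) ⟨hs, le_rfl⟩
    exact (cyclePerm_of_forall_le (isPartitionOf_orbitPartition τ) (fun w hw => (hIcc w hw).2)
      _ hτs).antisymm (hIcc _ (cyclePerm_mem (isPartitionOf_orbitPartition τ) s)).1

lemma IsNested.isNoncrossing_orbitPartition {τ : Perm (Fin n)} (h : IsNested τ) :
    IsNoncrossing (orbitPartition τ) := by
  intro a b c d hab hbc hcd hac hbd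
  simp only [sameBlock_orbitPartition] at hac hbd ⊢
  by_contra hab'
  -- `x` is the last point of the cycle of `a` before `b`; the arc from `x` to `τ x` jumps over `b`
  have hne : (univ.filter fun y => τ.SameCycle a y ∧ y < b).Nonempty :=
    ⟨a, by simp [hab, Perm.SameCycle.refl]⟩
  set x := (univ.filter fun y => τ.SameCycle a y ∧ y < b).max' hne
  obtain ⟨hax, hxb⟩ := (mem_filter.mp (max'_mem _ hne)).2
  have hxc : τ.SameCycle x c := hax.symm.trans hac
  have hxτ : x < τ x := lt_of_not_ge fun hτx =>
    ((hxc.mem_of_mapsTo (h.mapsTo_Icc hτx) ⟨hτx, le_rfl⟩).2.trans_lt (hxb.trans hbc)).false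
  have hbτ : b < τ x := by
    rcases lt_trichotomy (τ x) b with hτb | hτb | hτb
    · refine absurd (le_max' _ (τ x) ?_) hxτ.not_ge
      simp [hax.trans (Perm.sameCycle_apply_right.mpr (.refl τ x)), hτb]
    · exact absurd (hτb ▸ hax.trans (Perm.sameCycle_apply_right.mpr (.refl τ x))) hab'
    · exact hτb
  have hτc : τ x ≤ c := le_of_not_gt fun hcτ =>
    (hxc.symm.mem_of_mapsTo (h.mapsTo_Ioo hxτ) ⟨hxb.trans hbc, hcτ⟩).1.false
  exact (hbd.mem_of_mapsTo (h.mapsTo_Ioo hxτ) ⟨hxb, hbτ⟩).2.not_ge (hτc.trans hcd.le)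

lemma bijOn_cyclePerm :
    Set.BijOn (cyclePerm (n := n)) {P | IsPartitionOf n P ∧ IsNoncrossing P}
      {σ | Function.Injective σ ∧ IsNested σ} := by
  refine ⟨fun P ⟨hP, hnc⟩ => ⟨cyclePerm_injective hP, hnc.isNested_cyclePerm hP⟩,
    injOn_cyclePerm.mono fun _ hP => hP.1, fun σ ⟨hσ, hnest⟩ => ?_⟩
  let τ : Perm (Fin n) := Equiv.ofBijective σ hσ.bijective_of_finite
  have hτ : IsNested τ := hnest
  exact ⟨orbitPartition τ, ⟨isPartitionOf_orbitPartition τ, hτ.isNoncrossing_orbitPartition⟩,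
    hτ.cyclePerm_orbitPartition⟩

end Nested

section Pairs

variable {n : ℕ}

/-- In the paper's 1-based numbering of `{1,…,2n}`, with `s, t` standing for `s+1, t+1`,
`oddPt s` and `evenPt t` are the points `2s` and `2t−1`. -/
def oddPt (s : Fin n) : Fin (2*n) := ⟨2 * s.val + 1, by omega⟩

def evenPt (t : Fin n) : Fin (2*n) := ⟨2 * t.val, by omega⟩

def pairFor (s t : Fin n) : Finset (Fin (2*n)) := {oddPt s, evenPt t}

def pairsOf (σ : Fin n → Fin n) : Finset (Finset (Fin (2*n))) :=
  univ.image fun s => pairFor s (σ s)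

lemma alphaMap_eq_pairsOf (P : Finset (Finset (Fin n))) : alphaMap P = pairsOf (cyclePerm P) :=
  rfl

@[simp] lemma val_oddPt (s : Fin n) : (oddPt s).val = 2 * s.val + 1 := rfl

@[simp] lemma val_evenPt (t : Fin n) : (evenPt t).val = 2 * t.val := rfl

@[simp] lemma oddPt_inj {s s' : Fin n} : oddPt s = oddPt s' ↔ s = s' := by
  simp [Fin.ext_iff]

@[simp] lemma evenPt_inj {t t' : Fin n} : evenPt t = evenPt t' ↔ t = t' := by
  simp [Fin.ext_iff]

@[simp] lemma oddPt_ne_evenPt (s t : Fin n) : oddPt s ≠ evenPt t := by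
  simp [Fin.ext_iff]; omega

@[simp] lemma evenPt_ne_oddPt (s t : Fin n) : evenPt t ≠ oddPt s :=
  (oddPt_ne_evenPt s t).symm

@[simp] lemma oddPt_lt_oddPt {s u : Fin n} : oddPt s < oddPt u ↔ s < u := by
  simp only [Fin.lt_def, val_oddPt]; omega

@[simp] lemma evenPt_lt_evenPt {t t' : Fin n} : evenPt t < evenPt t' ↔ t < t' := by
  simp only [Fin.lt_def, val_evenPt]; omega

@[simp] lemma oddPt_lt_evenPt {s t : Fin n} : oddPt s < evenPt t ↔ s < t := by
  simp only [Fin.lt_def, val_oddPt, val_evenPt]; omega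

@[simp] lemma evenPt_lt_oddPt {s t : Fin n} : evenPt t < oddPt s ↔ t ≤ s := by
  simp only [Fin.lt_def, Fin.le_def, val_oddPt, val_evenPt]; omega

lemma oddPt_or_evenPt (x : Fin (2*n)) : (∃ s, oddPt s = x) ∨ ∃ t, evenPt t = x := by
  rcases Nat.even_or_odd' x.val with ⟨k, hk | hk⟩
  · exact .inr ⟨⟨k, by omega⟩, Fin.ext hk.symm⟩
  · exact .inl ⟨⟨k, by omega⟩, Fin.ext hk.symm⟩

@[simp] lemma mem_pairFor {s t : Fin n} {x : Fin (2*n)} :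
    x ∈ pairFor s t ↔ x = oddPt s ∨ x = evenPt t := by
  simp [pairFor]

lemma pairFor_inj {s t s' t' : Fin n} : pairFor s t = pairFor s' t' ↔ s = s' ∧ t = t' := by
  refine ⟨fun h => ?_, fun ⟨hs, ht⟩ => hs ▸ ht ▸ rfl⟩
  have hs : oddPt s ∈ pairFor s' t' := h ▸ mem_pairFor.mpr (.inl rfl)
  have ht : evenPt t ∈ pairFor s' t' := h ▸ mem_pairFor.mpr (.inr rfl)
  simp_all

lemma card_pairFor (s t : Fin n) : (pairFor s t).card = 2 :=
  card_pair (oddPt_ne_evenPt s t)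

lemma mem_pairsOf {σ : Fin n → Fin n} {B : Finset (Fin (2*n))} :
    B ∈ pairsOf σ ↔ ∃ s, pairFor s (σ s) = B := by
  simp [pairsOf]

lemma pairFor_mem_pairsOf (σ : Fin n → Fin n) (s : Fin n) : pairFor s (σ s) ∈ pairsOf σ :=
  mem_pairsOf.mpr ⟨s, rfl⟩

lemma eq_of_mem_pairFor {σ : Fin n → Fin n} (hσ : Function.Injective σ) {s s' : Fin n}
    {x : Fin (2*n)} (h : x ∈ pairFor s (σ s)) (h' : x ∈ pairFor s' (σ s')) : s = s' := by
  simp only [mem_pairFor] at h h'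
  rcases h with rfl | rfl <;> simp at h'
  · exact h'
  · exact hσ h'

lemma pairsOf_injective : Function.Injective (pairsOf (n := n)) := by
  intro σ σ' h
  funext s
  obtain ⟨w, hw⟩ := mem_pairsOf.mp (h ▸ pairFor_mem_pairsOf σ s)
  obtain ⟨rfl, hσ⟩ := pairFor_inj.mp hw
  exact hσ.symm

lemma isPairPartition_pairsOf {σ : Fin n → Fin n} (hσ : Function.Injective σ) :
    IsPairPartition (2*n) (pairsOf σ) := by
  refine ⟨⟨fun B hB => ?_, fun x => ?_⟩, fun B hB => ?_⟩
  · obtain ⟨s, rfl⟩ := mem_pairsOf.mp hB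
    exact ⟨oddPt s, by simp⟩
  · obtain ⟨s, hs⟩ : ∃ s, x ∈ pairFor s (σ s) := by
      rcases oddPt_or_evenPt x with ⟨s, rfl⟩ | ⟨t, rfl⟩
      · exact ⟨s, by simp⟩
      · obtain ⟨s, rfl⟩ := Finite.surjective_of_injective hσ t
        exact ⟨s, by simp⟩
    refine ⟨_, ⟨pairFor_mem_pairsOf σ s, hs⟩, fun B ⟨hB, hxB⟩ => ?_⟩
    obtain ⟨w, rfl⟩ := mem_pairsOf.mp hB
    rw [eq_of_mem_pairFor hσ hxB hs]
  · obtain ⟨s, rfl⟩ := mem_pairsOf.mp hB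
    exact card_pairFor _ _

lemma forall_mem_pairsOf_iff {R : Fin (2*n) → Fin (2*n) → Prop} (hR : ∀ a b, R a b → R b a)
    (σ : Fin n → Fin n) :
    (∀ B ∈ pairsOf σ, ∀ a ∈ B, ∀ b ∈ B, a ≠ b → R a b) ↔ ∀ s, R (oddPt s) (evenPt (σ s)) := by
  refine ⟨fun h s => h _ (pairFor_mem_pairsOf σ s) _ (by simp) _ (by simp) (by simp),
    fun h B hB a ha b hb hab => ?_⟩
  obtain ⟨s, rfl⟩ := mem_pairsOf.mp hB
  simp only [mem_pairFor] at ha hb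
  rcases ha with rfl | rfl <;> rcases hb with rfl | rfl
  · exact absurd rfl hab
  · exact h s
  · exact hR _ _ (h s)
  · exact absurd rfl hab

lemma pairFor_cases_of_lt {s t : Fin n} {a c : Fin (2*n)} (ha : a ∈ pairFor s t)
    (hc : c ∈ pairFor s t) (hac : a < c) :
    (a = oddPt s ∧ c = evenPt t) ∨ (a = evenPt t ∧ c = oddPt s) := by
  simp only [mem_pairFor] at ha hc
  rcases ha with rfl | rfl <;> rcases hc with rfl | rfl <;> simp_all

lemma IsNested.isNoncrossing_pairsOf {τ : Perm (Fin n)} (h : IsNested τ) :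
    IsNoncrossing (pairsOf τ) := by
  rintro a b c d hab hbc hcd ⟨_, hB, ha, hc⟩ ⟨_, hB', hb, hd⟩
  obtain ⟨s, rfl⟩ := mem_pairsOf.mp hB
  obtain ⟨u, rfl⟩ := mem_pairsOf.mp hB'
  have hu : τ.SameCycle (τ u) u := Perm.sameCycle_apply_left.mpr (.refl τ u)
  exfalso
  rcases pairFor_cases_of_lt ha hc (hab.trans hbc) with ⟨rfl, rfl⟩ | ⟨rfl, rfl⟩ <;>
    rcases pairFor_cases_of_lt hb hd (hbc.trans hcd) with ⟨rfl, rfl⟩ | ⟨rfl, rfl⟩ <;>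
    simp only [oddPt_lt_oddPt, evenPt_lt_evenPt, oddPt_lt_evenPt, evenPt_lt_oddPt]
      at hab hbc hcd
  · exact (h.1 (hab.trans hbc) ⟨hab, hbc⟩).2.not_gt hcd
  · exact (hu.mem_of_mapsTo (h.mapsTo_Ioo (hab.trans hbc)) ⟨hab, hbc⟩).2.not_ge hcd
  · exact (h.2 (hab.trans hbc.le) ⟨hab, hbc⟩).2.not_gt hcd
  · exact (hu.mem_of_mapsTo (h.mapsTo_Icc (hab.le.trans hbc)) ⟨hab.le, hbc⟩).2.not_gt hcd

lemma IsNoncrossing.eq_of_crossing {σ : Fin n → Fin n} (hnc : IsNoncrossing (pairsOf σ))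
    (hσ : Function.Injective σ) {s u : Fin n} {a b c d : Fin (2*n)}
    (ha : a ∈ pairFor s (σ s)) (hc : c ∈ pairFor s (σ s))
    (hb : b ∈ pairFor u (σ u)) (hd : d ∈ pairFor u (σ u))
    (hab : a < b) (hbc : b < c) (hcd : c < d) : s = u := by
  obtain ⟨B, hB, haB, hbB⟩ := hnc a b c d hab hbc hcd
    ⟨_, pairFor_mem_pairsOf σ s, ha, hc⟩ ⟨_, pairFor_mem_pairsOf σ u, hb, hd⟩
  obtain ⟨w, rfl⟩ := mem_pairsOf.mp hB
  exact (eq_of_mem_pairFor hσ ha haB).trans (eq_of_mem_pairFor hσ hb hbB).symm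

lemma IsNoncrossing.isNested_of_pairsOf {σ : Fin n → Fin n} (hnc : IsNoncrossing (pairsOf σ))
    (hσ : Function.Injective σ) : IsNested σ := by
  constructor
  · intro s u hs ⟨hsu, huσ⟩
    refine ⟨lt_of_not_ge fun h => hsu.ne ?_, lt_of_not_ge fun h => hsu.ne ?_⟩
    · exact (hnc.eq_of_crossing hσ (a := evenPt (σ u)) (b := oddPt s) (c := oddPt u) (d := evenPt (σ s))
        (by simp) (by simp) (by simp) (by simp) (by simpa) (by simpa) (by simpa)).symm
    · rcases h.lt_or_eq with h | h
      · exact hnc.eq_of_crossing hσ (a := oddPt s) (b := oddPt u) (c := evenPt (σ s)) (d := evenPt (σ u))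
          (by simp) (by simp) (by simp) (by simp) (by simpa) (by simpa) (by simpa)
      · exact hσ h
  · intro s u hs ⟨hσu, hus⟩
    refine ⟨lt_of_not_ge fun h => hus.ne ?_, le_of_not_gt fun h => hus.ne ?_⟩
    · rcases h.lt_or_eq with h | h
      · exact hnc.eq_of_crossing hσ (a := evenPt (σ u)) (b := evenPt (σ s)) (c := oddPt u) (d := oddPt s)
          (by simp) (by simp) (by simp) (by simp) (by simpa) (by simpa) (by simpa)
      · exact hσ h
    · exact (hnc.eq_of_crossing hσ (a := evenPt (σ s)) (b := oddPt u) (c := oddPt s) (d := evenPt (σ u))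
        (by simp) (by simp) (by simp) (by simp) (by simpa) (by simpa) (by simpa)).symm

def IsEvenOddPairing (Q : Finset (Finset (Fin (2*n)))) : Prop :=
  ∀ B ∈ Q, ∀ a ∈ B, ∀ b ∈ B, a ≠ b → a.val % 2 ≠ b.val % 2

lemma exists_eq_pairFor {B : Finset (Fin (2*n))} (hB : B.card = 2)
    (hpar : ∀ a ∈ B, ∀ b ∈ B, a ≠ b → a.val % 2 ≠ b.val % 2) : ∃ s t, B = pairFor s t := by
  obtain ⟨x, y, hxy, rfl⟩ := card_eq_two.mp hB
  have hpar := hpar x (by simp) y (by simp) hxy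
  rcases oddPt_or_evenPt x with ⟨s, rfl⟩ | ⟨t, rfl⟩ <;>
    rcases oddPt_or_evenPt y with ⟨s', rfl⟩ | ⟨t', rfl⟩
  · simp at hpar
  · exact ⟨s, t', rfl⟩
  · exact ⟨s', t, pair_comm _ _⟩
  · simp at hpar

lemma exists_pairsOf_eq {Q : Finset (Finset (Fin (2*n)))} (hQ : IsPairPartition (2*n) Q)
    (hpar : IsEvenOddPairing Q) : ∃ σ, Function.Injective σ ∧ pairsOf σ = Q := by
  have hpairs : ∀ B ∈ Q, ∃ s t, B = pairFor s t := fun B hB =>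
    exists_eq_pairFor (hQ.2 B hB) (hpar B hB)
  have hσ : ∀ s, ∃ t, pairFor s t ∈ Q := fun s => by
    obtain ⟨B, ⟨hB, hsB⟩, -⟩ := hQ.1.2 (oddPt s)
    obtain ⟨s', t, rfl⟩ := hpairs B hB
    obtain rfl : s' = s := by simpa [eq_comm] using hsB
    exact ⟨t, hB⟩
  choose σ hσ using hσ
  refine ⟨σ, fun s s' h => ?_, Finset.Subset.antisymm (fun B hB => ?_) fun B hB => ?_⟩
  · have := hQ.1.eq_of_mem (hσ s) (hσ s') (by simp : evenPt (σ s) ∈ _) (by simp [h])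
    exact (pairFor_inj.mp this).1
  · obtain ⟨s, rfl⟩ := mem_pairsOf.mp hB
    exact hσ s
  · obtain ⟨s, t, rfl⟩ := hpairs B hB
    rw [hQ.1.eq_of_mem hB (hσ s) (by simp : oddPt s ∈ _) (by simp)]
    exact pairFor_mem_pairsOf σ s

lemma bijOn_pairsOf :
    Set.BijOn (pairsOf (n := n)) {σ | Function.Injective σ ∧ IsNested σ}
      {Q | IsPairPartition (2*n) Q ∧ IsNoncrossing Q ∧ IsEvenOddPairing Q} := by
  refine ⟨fun σ ⟨hσ, hnest⟩ => ⟨isPairPartition_pairsOf hσ, ?_, ?_⟩, pairsOf_injective.injOn,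
    fun Q ⟨hQ, hnc, hpar⟩ => ?_⟩
  · let τ : Perm (Fin n) := Equiv.ofBijective σ hσ.bijective_of_finite
    exact (show IsNested τ from hnest).isNoncrossing_pairsOf
  · refine (forall_mem_pairsOf_iff (fun a b h => Ne.symm h) σ).mpr fun s => ?_
    simp only [val_oddPt, val_evenPt]
    omega
  · obtain ⟨σ, hσ, rfl⟩ := exists_pairsOf_eq hQ hpar
    exact ⟨σ, ⟨hσ, hnc.isNested_of_pairsOf hσ⟩, rfl⟩

theorem bijOn_alphaMap :
    Set.BijOn (alphaMap (n := n)) {P | IsPartitionOf n P ∧ IsNoncrossing P}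
      {Q | IsPairPartition (2*n) Q ∧ IsNoncrossing Q ∧ IsEvenOddPairing Q} :=
  bijOn_pairsOf.comp bijOn_cyclePerm

end Pairs

lemma natCast_eq_natCast_iff_of_lt {m a b : ℕ} (ha : a < 3 * m) (hb : b < 3 * m) :
    (a : ZMod m) = b ↔ a = b ∨ a = b + m ∨ a = b + 2 * m ∨ b = a + m ∨ b = a + 2 * m := by
  rw [ZMod.natCast_eq_natCast_iff']
  have := Nat.mod_lt a (by omega : 0 < m)
  have := Nat.mod_lt b (by omega : 0 < m)
  have := Nat.div_add_mod a m
  have := Nat.div_add_mod b m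
  have : a / m < 3 := Nat.div_lt_of_lt_mul (by linarith)
  have : b / m < 3 := Nat.div_lt_of_lt_mul (by linarith)
  generalize a / m = x at *
  generalize b / m = y at *
  interval_cases x <;> interval_cases y <;> omega

section Adapted

variable {n m p : ℕ}

/-- Condition (i) of `NC(W^k)` for `t = σ_π(s)`. -/
def ShiftOrReflect (p : ℕ) (s t : Fin n) : Prop :=
  (val1 t : ZMod (2*p)) = (val1 s : ZMod (2*p)) + 1 ∨
  (val1 t : ZMod (2*p)) = 1 - (val1 s : ZMod (2*p))

/-- Conditions (1)–(3) of `NC²(W̃^k)` on a pair `{a, b}`. -/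
def PairCond (p : ℕ) (a b : Fin m) : Prop :=
  ((val1 a : ZMod (4*p)) + (val1 b : ZMod (4*p)) = 1) ∨
  (∃ i : ℕ, 1 ≤ i ∧ i ≤ p - 1 ∧
    ((res a (4*p) = 2*i ∧ res b (4*p) = 2*i + 1) ∨
     (res a (4*p) = 2*i + 1 ∧ res b (4*p) = 2*i))) ∨
  (∃ i : ℕ, 1 ≤ i ∧ i ≤ p - 1 ∧
    ((res a (4*p) = 4*p - 2*i ∧ res b (4*p) = 4*p + 1 - 2*i) ∨
     (res a (4*p) = 4*p + 1 - 2*i ∧ res b (4*p) = 4*p - 2*i)))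

def PairAdapted {L : Type*} (p : ℕ) (u : ℕ → L) (a b : Fin m) : Prop :=
  labTilde p u a = labTilde p u b ∧ PairCond p a b

lemma natCast_val1 (s : Fin n) (m : ℕ) : (val1 s : ZMod m) = ((s.val % m + 1 : ℕ) : ZMod m) := by
  rw [val1, Nat.cast_add, Nat.cast_add, ZMod.natCast_mod]

lemma natCast_two_mul_mod (s p : ℕ) :
    ((2 * s : ℕ) : ZMod (4*p)) = ((2 * (s % (2*p)) : ℕ) : ZMod (4*p)) := by
  rw [ZMod.natCast_eq_natCast_iff', show 4*p = 2*(2*p) by ring, Nat.mul_mod_mul_left,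
    Nat.mul_mod_mul_left, Nat.mod_mod]

lemma val1_eq_val1_add_one_iff (hp : 0 < p) (s t : Fin n) :
    (val1 t : ZMod (2*p)) = (val1 s : ZMod (2*p)) + 1 ↔
      t.val % (2*p) = s.val % (2*p) + 1 ∨ (s.val % (2*p) + 1 = 2*p ∧ t.val % (2*p) = 0) := by
  have := Nat.mod_lt s.val (by omega : 0 < 2*p)
  have := Nat.mod_lt t.val (by omega : 0 < 2*p)
  rw [natCast_val1, natCast_val1, ← Nat.cast_add_one,
    natCast_eq_natCast_iff_of_lt] <;>
  omega

lemma val1_eq_one_sub_val1_iff (hp : 0 < p) (s t : Fin n) :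
    (val1 t : ZMod (2*p)) = 1 - (val1 s : ZMod (2*p)) ↔
      t.val % (2*p) + s.val % (2*p) + 1 = 2*p := by
  have := Nat.mod_lt s.val (by omega : 0 < 2*p)
  have := Nat.mod_lt t.val (by omega : 0 < 2*p)
  rw [eq_sub_iff_add_eq, natCast_val1, natCast_val1, ← Nat.cast_add,
    ← Nat.cast_one (R := ZMod (2*p)), natCast_eq_natCast_iff_of_lt] <;>
  omega

lemma val1_oddPt_add_val1_evenPt_eq_one_iff (hp : 0 < p) (s t : Fin n) :
    (val1 (oddPt s) : ZMod (4*p)) + (val1 (evenPt t) : ZMod (4*p)) = 1 ↔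
      t.val % (2*p) + s.val % (2*p) + 1 = 2*p := by
  have := Nat.mod_lt s.val (by omega : 0 < 2*p)
  have := Nat.mod_lt t.val (by omega : 0 < 2*p)
  have hsum : (val1 (oddPt s) : ZMod (4*p)) + val1 (evenPt t) =
      (((2 * s.val : ℕ) : ZMod (4*p)) + ((2 * t.val : ℕ) : ZMod (4*p))) + ((3 : ℕ) : ZMod (4*p)) := by
    simp only [val1, val_oddPt, val_evenPt]
    push_cast
    ring
  rw [hsum, natCast_two_mul_mod s.val, natCast_two_mul_mod t.val, ← Nat.cast_add, ← Nat.cast_add,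
    ← Nat.cast_one (R := ZMod (4*p)), natCast_eq_natCast_iff_of_lt] <;>
  omega

lemma res_oddPt (hp : 0 < p) (s : Fin n) : res (oddPt s) (4*p) = 2 * (s.val % (2*p)) + 2 := by
  have := Nat.div_add_mod s.val (2*p)
  rw [res, val_oddPt, show 2 * s.val + 1 = s.val / (2*p) * (4*p) + (2 * (s.val % (2*p)) + 1) by
    linarith, Nat.mul_add_mod_of_lt (by have := Nat.mod_lt s.val (by omega : 0 < 2*p); omega)]

lemma res_evenPt (hp : 0 < p) (t : Fin n) : res (evenPt t) (4*p) = 2 * (t.val % (2*p)) + 1 := by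
  have := Nat.div_add_mod t.val (2*p)
  rw [res, val_evenPt, show 2 * t.val = t.val / (2*p) * (4*p) + 2 * (t.val % (2*p)) by
    linarith, Nat.mul_add_mod_of_lt (by have := Nat.mod_lt t.val (by omega : 0 < 2*p); omega)]

lemma shiftOrReflect_iff_pairCond (hp : 0 < p) (s t : Fin n) :
    ShiftOrReflect p s t ↔ PairCond p (oddPt s) (evenPt t) := by
  have := Nat.mod_lt s.val (by omega : 0 < 2*p)
  have := Nat.mod_lt t.val (by omega : 0 < 2*p)
  rw [ShiftOrReflect, PairCond, val1_eq_val1_add_one_iff hp, val1_eq_one_sub_val1_iff hp,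
    val1_oddPt_add_val1_evenPt_eq_one_iff hp, res_oddPt hp, res_evenPt hp]
  generalize s.val % (2*p) = r at *
  generalize t.val % (2*p) = q at *
  constructor
  · -- a shift `q = r + 1` is condition (2) or (3), or else a reflection
    rintro ((h | h) | h)
    · rcases lt_trichotomy (r + 1) p with hr | hr | hr
      · exact .inr (.inl ⟨r + 1, by omega, by omega, .inl ⟨by omega, by omega⟩⟩)
      · exact .inl (by omega)
      · exact .inr (.inr ⟨2*p - 1 - r, by omega, by omega, .inl ⟨by omega, by omega⟩⟩)
    · exact .inl (by omega)
    · exact .inl h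
  · rintro (h | ⟨i, -, -, h⟩ | ⟨i, -, -, h⟩)
    · exact .inr h
    all_goals exact .inl (.inl (by omega))

lemma labTilde_oddPt (hp : 0 < p) {L : Type*} (u : ℕ → L) (s : Fin n) :
    labTilde p u (oddPt s) = lab p u s := by
  have := Nat.mod_lt s.val (by omega : 0 < 2*p)
  rw [labTilde, lab, res_oddPt hp, res]
  congr 1
  split_ifs <;> omega

lemma labTilde_evenPt (hp : 0 < p) {L : Type*} (u : ℕ → L) (t : Fin n) :
    labTilde p u (evenPt t) = lab p u t := by
  have := Nat.mod_lt t.val (by omega : 0 < 2*p)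
  rw [labTilde, lab, res_evenPt hp, res]
  congr 1
  split_ifs <;> omega

lemma PairCond.symm {a b : Fin m} (h : PairCond p a b) : PairCond p b a := by
  rcases h with h | ⟨i, h1, h2, h⟩ | ⟨i, h1, h2, h⟩
  · exact .inl (by rwa [add_comm])
  · exact .inr (.inl ⟨i, h1, h2, h.symm.imp And.symm And.symm⟩)
  · exact .inr (.inr ⟨i, h1, h2, h.symm.imp And.symm And.symm⟩)

lemma PairCond.mod_two_ne {a b : Fin m} (h : PairCond p a b) : a.val % 2 ≠ b.val % 2 := by
  have h2 : 2 ∣ 4*p := ⟨2*p, by ring⟩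
  rcases h with h | ⟨i, -, -, h⟩ | ⟨i, -, -, h⟩
  · rw [val1, val1, ← Nat.cast_add, ← Nat.cast_one (R := ZMod (4*p)),
      ZMod.natCast_eq_natCast_iff'] at h
    have := congrArg (· % 2) h
    simp only [Nat.mod_mod_of_dvd _ h2] at this
    omega
  all_goals
    have ha := Nat.mod_mod_of_dvd a.val h2
    have hb := Nat.mod_mod_of_dvd b.val h2
    simp only [res] at h
    generalize a.val % (4*p) = x at *
    generalize b.val % (4*p) = y at *
    omega

lemma PairAdapted.symm {L : Type*} {u : ℕ → L} {a b : Fin m} (h : PairAdapted p u a b) :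
    PairAdapted p u b a :=
  ⟨h.1.symm, h.2.symm⟩

lemma IsPartitionOf.adapted_iff {P : Finset (Finset (Fin n))} (hP : IsPartitionOf n P)
    (hp : 0 < p) {L : Type*} (u : ℕ → L) :
    ((∀ s, ShiftOrReflect p s (cyclePerm P s)) ∧ ∀ B ∈ P, ∀ a ∈ B, ∀ b ∈ B, lab p u a = lab p u b) ↔
      ∀ B ∈ alphaMap P, ∀ a ∈ B, ∀ b ∈ B, a ≠ b → PairAdapted p u a b := by
  rw [hP.forall_mem_block_iff, alphaMap_eq_pairsOf,
    forall_mem_pairsOf_iff (fun _ _ => PairAdapted.symm), ← forall_and]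
  refine forall_congr' fun s => ?_
  rw [PairAdapted, labTilde_oddPt hp, labTilde_evenPt hp, shiftOrReflect_iff_pairCond hp, and_comm]

end Adapted

theorem statement1_general (p k : ℕ) (hp : 1 ≤ p) {L : Type*} (u : ℕ → L) :
    Set.BijOn (alphaMap (n := 2*p*k))
      {P | IsPartitionOf (2*p*k) P ∧ IsNoncrossing P ∧
        (∀ s : Fin (2*p*k),
          (val1 (cyclePerm P s) : ZMod (2*p)) = (val1 s : ZMod (2*p)) + 1 ∨
          (val1 (cyclePerm P s) : ZMod (2*p)) = 1 - (val1 s : ZMod (2*p))) ∧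
        (∀ B ∈ P, ∀ a ∈ B, ∀ b ∈ B, lab p u a = lab p u b)}
      {Q | IsPairPartition (2*(2*p*k)) Q ∧ IsNoncrossing Q ∧
        ∀ B ∈ Q, ∀ a ∈ B, ∀ b ∈ B, a ≠ b →
          labTilde p u a = labTilde p u b ∧
          (((val1 a : ZMod (4*p)) + (val1 b : ZMod (4*p)) = 1) ∨
           (∃ i : ℕ, 1 ≤ i ∧ i ≤ p - 1 ∧
             ((res a (4*p) = 2*i ∧ res b (4*p) = 2*i + 1) ∨
              (res a (4*p) = 2*i + 1 ∧ res b (4*p) = 2*i))) ∨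
           (∃ i : ℕ, 1 ≤ i ∧ i ≤ p - 1 ∧
             ((res a (4*p) = 4*p - 2*i ∧ res b (4*p) = 4*p + 1 - 2*i) ∨
              (res a (4*p) = 4*p + 1 - 2*i ∧ res b (4*p) = 4*p - 2*i))))} := by
  obtain ⟨hmaps, hinj, hsurj⟩ := bijOn_alphaMap (n := 2*p*k)
  refine ⟨fun P ⟨hP, hnc, hshift, hlab⟩ => ?_,
    fun P hP P' hP' => hinj ⟨hP.1, hP.2.1⟩ ⟨hP'.1, hP'.2.1⟩, fun Q ⟨hQ, hnc, hadapted⟩ => ?_⟩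
  · obtain ⟨hQ, hncQ, -⟩ := hmaps ⟨hP, hnc⟩
    exact ⟨hQ, hncQ, (hP.adapted_iff hp u).mp ⟨hshift, hlab⟩⟩
  · have hpar : IsEvenOddPairing Q := fun B hB a ha b hb hab =>
      PairCond.mod_two_ne (hadapted B hB a ha b hb hab).2
    obtain ⟨P, ⟨hP, hncP⟩, rfl⟩ := hsurj ⟨hQ, hnc, hpar⟩
    exact ⟨P, ⟨hP, hncP, (hP.adapted_iff hp u).mpr hadapted⟩, rfl⟩

/-- Lemma 4.1. The map `π ↦ α(π) = {{2s, 2σ_π(s)−1} : s}` is a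
bijection from the set `NC(W^k)` of noncrossing partitions of `{1,…,2pk}` adapted to
`W^k` (shift/reflection condition mod `2p`, blocks constant for the label map) onto the
set `NC²(W̃^k)` of noncrossing pair partitions of `{1,…,4pk}` adapted to `W̃^k`. -/
theorem statement1 (p k : ℕ) (hp : 1 ≤ p) (hk : 1 ≤ k) {L : Type*} (u : ℕ → L) :
    Set.BijOn (alphaMap (n := 2*p*k))
      {P | IsPartitionOf (2*p*k) P ∧ IsNoncrossing P ∧
        (∀ s : Fin (2*p*k),
          (val1 (cyclePerm P s) : ZMod (2*p)) = (val1 s : ZMod (2*p)) + 1 ∨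
          (val1 (cyclePerm P s) : ZMod (2*p)) = 1 - (val1 s : ZMod (2*p))) ∧
        (∀ B ∈ P, ∀ a ∈ B, ∀ b ∈ B, lab p u a = lab p u b)}
      {Q | IsPairPartition (2*(2*p*k)) Q ∧ IsNoncrossing Q ∧
        ∀ B ∈ Q, ∀ a ∈ B, ∀ b ∈ B, a ≠ b →
          labTilde p u a = labTilde p u b ∧
          (((val1 a : ZMod (4*p)) + (val1 b : ZMod (4*p)) = 1) ∨
           (∃ i : ℕ, 1 ≤ i ∧ i ≤ p - 1 ∧
             ((res a (4*p) = 2*i ∧ res b (4*p) = 2*i + 1) ∨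
              (res a (4*p) = 2*i + 1 ∧ res b (4*p) = 2*i))) ∨
           (∃ i : ℕ, 1 ≤ i ∧ i ≤ p - 1 ∧
             ((res a (4*p) = 4*p - 2*i ∧ res b (4*p) = 4*p + 1 - 2*i) ∨
              (res a (4*p) = 4*p + 1 - 2*i ∧ res b (4*p) = 4*p - 2*i))))} :=
  statement1_general p k hp u
end

section
/- Let p ≥ 1 be an integer, let d_1,…,d_{p+1} be real numbers with d_1 ≠ 0, let (t_i)_{i≥0} be a sequence of real numbers, and set T(X) = Σ_{i≥0} t_i X^i ∈ ℝ[[X]]. Suppose ψ ∈ ℝ[[z]] has zero constant term and satisfies the formal power series equation d_1·ψ = z·(d_1ψ + d_1)·(d_1ψ + d_2)···(d_1ψ + d_{p+1})·T(d_1ψ). Then for every k ≥ 1, the coefficient m_k of z^k in ψ satisfies d_1·m_k = Σ_{r=1}^{k} P_{k,r}(d_1,…,d_{p+1}) · T_{k,r}, where P_{k,r}(d_1,…,d_{p+1}) = Σ_{j_1+⋯+j_{p+1} = kp+r, j_i ≥ 0} (1/k)·C(k,j_1)·C(k,j_2)···C(k,j_{p+1})·d_1^{j_1}···d_{p+1}^{j_{p+1}}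 is the generalized multivariate Fuss–Narayana polynomial, and T_{k,r} = Σ_{i_1+⋯+i_k = r−1, i_j ≥ 0} t_{i_1}·t_{i_2}···t_{i_k}. -/
open Finset
open scoped Classical

/-!
Put `φ = d₁ψ` and `F(X) = (X + d₁)⋯(X + d_{p+1}) · T(X)`. The hypothesis says `φ = X · F(φ)`, so by
Lagrange inversion `k [z^k] φ = [X^(k-1)] F^k`, and expanding `F^k = ∏ (X + dᵢ)^k · T^k` by the
binomial theorem gives the Fuss–Narayana sum; the exponent `jᵢ` of `dᵢ` is `k` minus the exponent of
`X` taken from `(X + dᵢ)^k`, which is why the total degree is `kp + r`.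

Lagrange inversion is proved by residue calculus. Writing `φ = X Q` with `Q(0) ≠ 0`, one has
`[X^n] f(φ) φ' Q^(-(n+1)) = [X^n] f` for every `f`: after truncating `f` it suffices to take
`f = X^m`, and then `φ' Q^(-(j+1)) = Q^(-j) + X Q' Q^(-(j+1))` where, for `j ≥ 1`, `Q' Q^(-(j+1))`
is a multiple of the derivative of `Q^(-j)`, so the two terms cancel in degree `j`. For
`f = F^(n+1)` the left side is `[X^n] φ'` since `F(φ) = Q`. (If `F(0) = 0` then `φ = 0`.)
-/

namespace Finset.Nat

theorem sum_antidiagonalTuple_prod_choose_mul_pow_tsub {R : Type*} [CommSemiring R] {N : ℕ}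
    (a : Fin N → R) {k u : ℕ} (hu : u ≤ N * k) :
    ∑ w ∈ antidiagonalTuple N u, ∏ i, (k.choose (w i) : R) * a i ^ (k - w i) =
      ∑ j ∈ antidiagonalTuple N (N * k - u), ∏ i, (k.choose (j i) : R) * a i ^ j i := by
  have le_of_ne_zero (v : Fin N → ℕ) (b : Fin N → R) (hv : ∏ i, (k.choose (v i) : R) * b i ≠ 0)
      (i : Fin N) : v i ≤ k := by
    by_contra hi
    exact hv (prod_eq_zero (mem_univ i) (by simp [Nat.choose_eq_zero_of_lt (not_le.mp hi)]))
  have sum_tsub (v : Fin N → ℕ) (hv : ∀ i, v i ≤ k) : ∑ i, (k - v i) = N * k - ∑ i, v i := by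
    rw [sum_tsub_distrib _ fun i _ => hv i]
    simp
  refine sum_bij_ne_zero (fun w _ _ i => k - w i) ?_ ?_ ?_ ?_
  · intro w hw hne
    rw [mem_antidiagonalTuple] at hw ⊢
    rw [sum_tsub w (le_of_ne_zero w _ hne), hw]
  · intro w₁ _ h₁ w₂ _ h₂ heq
    funext i
    have := congrFun heq i
    have := le_of_ne_zero _ _ h₁ i
    have := le_of_ne_zero _ _ h₂ i
    omega
  · intro j hj hne
    have hle := le_of_ne_zero j _ hne
    have hsymm (i : Fin N) : k - (k - j i) = j i := Nat.sub_sub_self (hle i)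
    refine ⟨fun i => k - j i, ?_, ?_, funext hsymm⟩
    · rw [mem_antidiagonalTuple] at hj ⊢
      rw [sum_tsub j hle, hj]
      omega
    · simpa only [hsymm, Nat.choose_symm (hle _)] using hne
  · intro w _ hne
    exact prod_congr rfl fun i _ => by rw [Nat.choose_symm (le_of_ne_zero w _ hne i)]

end Finset.Nat

namespace PowerSeries

section Coefficients

variable {R : Type*} [CommSemiring R]

theorem coeff_prod_eq_sum_antidiagonalTuple {N : ℕ} (f : Fin N → R⟦X⟧) (n : ℕ) :
    coeff n (∏ i, f i) = ∑ l ∈ Nat.antidiagonalTuple N n, ∏ i, coeff (l i) (f i) := by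
  rw [coeff_prod, finsuppAntidiag, sum_map, ← piAntidiag_univ_fin_eq_antidiagonalTuple,
    ← sum_attach (piAntidiag univ n)]
  rfl

theorem coeff_pow_eq_sum_antidiagonalTuple (f : R⟦X⟧) (k n : ℕ) :
    coeff n (f ^ k) = ∑ l ∈ Nat.antidiagonalTuple k n, ∏ i, coeff (l i) f := by
  rw [← coeff_prod_eq_sum_antidiagonalTuple, prod_const, card_univ, Fintype.card_fin]

theorem coeff_X_add_C_pow (a : R) (k w : ℕ) :
    coeff w ((X + C a) ^ k) = k.choose w * a ^ (k - w) := by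
  rw [← Polynomial.coe_X, ← Polynomial.coe_C, ← Polynomial.coe_add, ← Polynomial.coe_pow,
    Polynomial.coeff_coe, Polynomial.coeff_X_add_C_pow, mul_comm]

theorem coeff_prod_X_add_C_pow {N : ℕ} (a : Fin N → R) (k : ℕ) {u : ℕ} (hu : u ≤ N * k) :
    coeff u (∏ i, (X + C (a i)) ^ k) =
      ∑ j ∈ Nat.antidiagonalTuple N (N * k - u), ∏ i, (k.choose (j i) : R) * a i ^ j i := by
  simp only [coeff_prod_eq_sum_antidiagonalTuple, coeff_X_add_C_pow,
    Nat.sum_antidiagonalTuple_prod_choose_mul_pow_tsub a hu]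

theorem coeff_pow_prod_X_add_C_mul_mk {p : ℕ} (d : Fin (p + 1) → R) (t : ℕ → R) (n : ℕ) :
    coeff n (((∏ i, (X + C (d i))) * mk t) ^ (n + 1)) =
      ∑ r ∈ Icc 1 (n + 1),
        (∑ j ∈ Nat.antidiagonalTuple (p + 1) ((n + 1) * p + r),
          ∏ i, ((n + 1).choose (j i) : R) * d i ^ j i) *
        ∑ i ∈ Nat.antidiagonalTuple (n + 1) (r - 1), ∏ m, t (i m) := by
  rw [mul_pow, ← prod_pow, coeff_mul, ← Nat.sum_antidiagonal_swap,
    Nat.sum_antidiagonal_eq_sum_range_succ_mk, ← Ico_add_one_right_eq_Icc, sum_Ico_eq_sum_range,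
    Nat.add_sub_cancel]
  refine sum_congr rfl fun b hb => ?_
  have hbn : b ≤ n := Nat.lt_succ_iff.mp (mem_range.mp hb)
  have hu : n - b ≤ (p + 1) * (n + 1) := (Nat.sub_le n b).trans (by nlinarith)
  rw [Prod.swap_prod_mk, coeff_prod_X_add_C_pow d _ hu, coeff_pow_eq_sum_antidiagonalTuple,
    Nat.add_sub_cancel_left]
  congr 3
  · have : (p + 1) * (n + 1) = (n + 1) * p + (n + 1) := by ring
    omega
  · simp

end Coefficients

theorem constantCoeff_subst_of_constantCoeff_eq_zero {R : Type*} [CommRing R] {a : R⟦X⟧}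
    (ha : constantCoeff a = 0) (f : R⟦X⟧) : constantCoeff (f.subst a) = constantCoeff f := by
  have hsub : HasSubst a := HasSubst.of_constantCoeff_zero' ha
  conv_lhs => rw [eq_X_mul_shift_add_const f, subst_add hsub, subst_mul hsub, subst_X hsub, subst_C]
  simp only [map_add, map_mul, ha, zero_mul, zero_add]
  exact MvPowerSeries.constantCoeff_C _

section LagrangeInversion

variable {K : Type*} [Field K] [CharZero K]

theorem coeff_derivative_X_mul_mul_inv_pow {Q : K⟦X⟧} (hQ : constantCoeff Q ≠ 0) (j : ℕ) :
    coeff j (d⁄dX K (X * Q) * Q⁻¹ ^ (j + 1)) = if j = 0 then 1 else 0 := by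
  have hsplit : d⁄dX K (X * Q) * Q⁻¹ ^ (j + 1) = Q⁻¹ ^ j + X * (d⁄dX K Q * Q⁻¹ ^ (j + 1)) := by
    rw [Derivation.leibniz, derivative_X, pow_succ]
    linear_combination (Q⁻¹ ^ j) * PowerSeries.mul_inv_cancel Q hQ
  rw [hsplit, map_add]
  rcases j with _ | i
  · simp
  · have hderiv : d⁄dX K (Q⁻¹ ^ (i + 1)) = -((i + 1 : K) • (d⁄dX K Q * Q⁻¹ ^ (i + 2))) := by
      rw [Derivation.leibniz_pow, derivative_inv', smul_eq_C_mul, smul_eq_mul]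
      simp only [add_tsub_cancel_right, nsmul_eq_mul, Nat.cast_add, Nat.cast_one, map_add,
        map_one, map_natCast]
      ring
    have hcoeff := congrArg (coeff i) hderiv
    rw [coeff_derivative, map_neg, map_smul, smul_eq_mul] at hcoeff
    rw [coeff_succ_X_mul, if_neg i.succ_ne_zero]
    apply mul_left_cancel₀ (Nat.cast_add_one_ne_zero i : (i + 1 : K) ≠ 0)
    linear_combination hcoeff

theorem coeff_X_mul_pow_mul_derivative_mul_inv_pow {Q : K⟦X⟧} (hQ : constantCoeff Q ≠ 0)
    {m n : ℕ} (hmn : m ≤ n) :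
    coeff n ((X * Q) ^ m * d⁄dX K (X * Q) * Q⁻¹ ^ (n + 1)) = if m = n then 1 else 0 := by
  obtain ⟨j, rfl⟩ := Nat.exists_eq_add_of_le hmn
  have hrw : (X * Q) ^ m * d⁄dX K (X * Q) * Q⁻¹ ^ (m + j + 1) =
      X ^ m * (d⁄dX K (X * Q) * Q⁻¹ ^ (j + 1)) * (Q * Q⁻¹) ^ m := by ring
  rw [hrw, PowerSeries.mul_inv_cancel Q hQ, one_pow, mul_one, coeff_X_pow_mul',
    if_pos le_self_add, Nat.add_sub_cancel_left, coeff_derivative_X_mul_mul_inv_pow hQ]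
  simp

/-- Change of variables `z = X Q` in a residue: `res f(z) dz / z^(n+1) = res f(X) dX / X^(n+1)`. -/
theorem coeff_subst_mul_derivative_mul_inv_pow {Q : K⟦X⟧} (hQ : constantCoeff Q ≠ 0)
    (f : K⟦X⟧) (n : ℕ) :
    coeff n (f.subst (X * Q) * d⁄dX K (X * Q) * Q⁻¹ ^ (n + 1)) = coeff n f := by
  have hsub : HasSubst (X * Q) := HasSubst.of_constantCoeff_zero' (by simp)
  conv_lhs => rw [eq_X_pow_mul_shift_add_trunc (n + 1) f, subst_add hsub, subst_mul hsub,
    subst_pow hsub, subst_X hsub, subst_coe hsub, Polynomial.aeval_def, eval₂_trunc_eq_sum_range]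
  rw [add_mul, add_mul, map_add, sum_mul, sum_mul, map_sum]
  have htail : coeff n ((X * Q) ^ (n + 1) * subst (X * Q) (mk fun i => coeff (i + (n + 1)) f) *
      d⁄dX K (X * Q) * Q⁻¹ ^ (n + 1)) = 0 := by
    rw [mul_pow, mul_assoc, mul_assoc, mul_assoc, coeff_X_pow_mul', if_neg (by omega)]
  have hterm : ∀ m ∈ range (n + 1), coeff n (algebraMap K K⟦X⟧ (coeff m f) * (X * Q) ^ m *
      d⁄dX K (X * Q) * Q⁻¹ ^ (n + 1)) = if m = n then coeff m f else 0 := by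
    intro m hm
    rw [Algebra.algebraMap_eq_smul_one, smul_mul_assoc, smul_mul_assoc, smul_mul_assoc, one_mul,
      map_smul,
      coeff_X_mul_pow_mul_derivative_mul_inv_pow hQ (Nat.lt_succ_iff.mp (mem_range.mp hm))]
    simp
  rw [htail, zero_add, sum_congr rfl hterm, sum_ite_eq', if_pos (self_mem_range_succ n)]

theorem coeff_succ_of_eq_X_mul_subst {F φ : K⟦X⟧} (hφ : φ = X * F.subst φ) (n : ℕ) :
    (n + 1 : K) * coeff (n + 1) φ = coeff n (F ^ (n + 1)) := by
  have hφ0 : constantCoeff φ = 0 := by rw [hφ]; simp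
  have hsub : HasSubst φ := HasSubst.of_constantCoeff_zero' hφ0
  by_cases hF : constantCoeff F = 0
  · have hφ_eq : φ = 0 := by
      obtain ⟨G, rfl⟩ := X_dvd_iff.mpr hF
      rw [subst_mul hsub, subst_X hsub] at hφ
      have hmul : φ * (1 - X * G.subst φ) = 0 := by linear_combination hφ
      refine (mul_eq_zero.mp hmul).resolve_right fun h => ?_
      simpa using congrArg constantCoeff h
    have hcoeff : coeff n (F ^ (n + 1)) = 0 :=
      X_pow_dvd_iff.mp (pow_dvd_pow_of_dvd (X_dvd_iff.mpr hF) _) n (lt_add_one n)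
    simp [hφ_eq, hcoeff]
  · set Q := F.subst φ
    have hQ : constantCoeff Q ≠ 0 := by rwa [constantCoeff_subst_of_constantCoeff_eq_zero hφ0]
    have key := coeff_subst_mul_derivative_mul_inv_pow hQ (F ^ (n + 1)) n
    rwa [← hφ, subst_pow hsub, mul_right_comm, ← mul_pow, PowerSeries.mul_inv_cancel Q hQ,
      one_pow, one_mul, coeff_derivative, mul_comm] at key

end LagrangeInversion

end PowerSeries

open PowerSeries in
theorem substSeries_eq_subst (t : ℕ → ℝ) {g : ℝ⟦X⟧} (hg : constantCoeff g = 0) :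
    substSeries t g = (PowerSeries.mk t).subst g := by
  ext n
  rw [coeff_subst' (HasSubst.of_constantCoeff_zero' hg),
    finsum_eq_sum_of_support_subset (s := range (n + 1))]
  · simp [substSeries]
  · intro i hi
    contrapose! hi
    simp only [coe_range, Set.mem_Iio, not_lt] at hi
    simp [X_pow_dvd_iff.mp (pow_dvd_pow_of_dvd (X_dvd_iff.mpr hg) i) n hi]

theorem statement2_general (p : ℕ) (d : Fin (p+1) → ℝ)
    (t : ℕ → ℝ) (ψ : PowerSeries ℝ) (hψ0 : PowerSeries.constantCoeff (R := ℝ) ψ = 0)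
    (heq : PowerSeries.C (R := ℝ) (d 0) * ψ =
      PowerSeries.X *
        (∏ i : Fin (p+1), (PowerSeries.C (R := ℝ) (d 0) * ψ + PowerSeries.C (R := ℝ) (d i))) *
        substSeries t (PowerSeries.C (R := ℝ) (d 0) * ψ)) :
    ∀ k : ℕ, 1 ≤ k →
      d 0 * PowerSeries.coeff (R := ℝ) k ψ =
        ∑ r ∈ Finset.Icc 1 k,
          (∑ j ∈ Finset.Nat.antidiagonalTuple (p+1) (k*p + r),
            (1 / (k : ℝ)) * ∏ i : Fin (p+1), ((Nat.choose k (j i) : ℝ) * (d i) ^ (j i))) *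
          (∑ i ∈ Finset.Nat.antidiagonalTuple k (r-1), ∏ m : Fin k, t (i m)) := by
  intro k hk
  obtain ⟨n, rfl⟩ := Nat.exists_eq_add_of_le' hk
  set φ := PowerSeries.C (d 0) * ψ
  have hφ0 : PowerSeries.constantCoeff φ = 0 := by simp [φ, hψ0]
  have hsub : PowerSeries.HasSubst φ := .of_constantCoeff_zero' hφ0
  have hfix : φ = PowerSeries.X *
      ((∏ i, (PowerSeries.X + PowerSeries.C (d i))) * PowerSeries.mk t).subst φ := by
    rw [PowerSeries.subst_mul hsub, ← substSeries_eq_subst t hφ0,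
      ← PowerSeries.coe_substAlgHom hsub, map_prod]
    simp only [map_add, PowerSeries.substAlgHom_X, PowerSeries.coe_substAlgHom,
      PowerSeries.subst_C]
    rw [← mul_assoc]
    exact heq
  have hlag := PowerSeries.coeff_succ_of_eq_X_mul_subst hfix n
  rw [PowerSeries.coeff_pow_prod_X_add_C_mul_mk, PowerSeries.coeff_C_mul] at hlag
  simp_rw [← mul_sum, mul_assoc, ← mul_sum]
  rw [← hlag]
  push_cast
  field_simp

/-- Theorem 5.1. If `ψ` has zero constant term and satisfies
`d₁ψ = z·(d₁ψ+d₁)⋯(d₁ψ+d_{p+1})·T(d₁ψ)` where `T(X) = Σ tᵢ Xⁱ`, then each coefficient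
`m_k` of `ψ` satisfies `d₁·m_k = Σ_{r=1}^k P_{k,r}(d₁,…,d_{p+1})·T_{k,r}`, with
`P_{k,r}` the generalized multivariate Fuss–Narayana polynomials and
`T_{k,r} = Σ_{i₁+⋯+i_k = r−1} t_{i₁}⋯t_{i_k}`. -/
theorem statement2 (p : ℕ) (hp : 1 ≤ p) (d : Fin (p+1) → ℝ) (hd : d 0 ≠ 0)
    (t : ℕ → ℝ) (ψ : PowerSeries ℝ) (hψ0 : PowerSeries.constantCoeff (R := ℝ) ψ = 0)
    (heq : PowerSeries.C (R := ℝ) (d 0) * ψ =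
      PowerSeries.X *
        (∏ i : Fin (p+1), (PowerSeries.C (R := ℝ) (d 0) * ψ + PowerSeries.C (R := ℝ) (d i))) *
        substSeries t (PowerSeries.C (R := ℝ) (d 0) * ψ)) :
    ∀ k : ℕ, 1 ≤ k →
      d 0 * PowerSeries.coeff (R := ℝ) k ψ =
        ∑ r ∈ Finset.Icc 1 k,
          (∑ j ∈ Finset.Nat.antidiagonalTuple (p+1) (k*p + r),
            (1 / (k : ℝ)) * ∏ i : Fin (p+1), ((Nat.choose k (j i) : ℝ) * (d i) ^ (j i))) *
          (∑ i ∈ Finset.Nat.antidiagonalTuple k (r-1), ∏ m : Fin k, t (i m)) :=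
  statement2_general p d t ψ hψ0 heq
end
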